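/- Let v : [0, t₀] → ℝ be absolutely continuous (or continuously differentiable) and suppose v attains its minimum over [0, t₀] at the right endpoint t₀ > 0. Then for α ∈ (0,1), the Caputo derivative satisfies ∂_t^α v(t₀) ≤ (v(t₀) - v(0)) / (Γ(1-α) t₀^α). -/

import Mathlib

/-!
Integrate by parts against the kernel `(t₀ - s)^(-α)` on `[0, T]` for `T < t₀`, with `v - v t₀` as
the primitive of `v'`. The remaining integral has the nonnegative integrand
`α (t₀ - s)^(-α-1) (v s - v t₀)` and can be dropped, and the boundary term at `T` vanishes as
`T → t₀⁻` since `v T - v t₀ = O(t₀ - T)` and `α < 1`.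
-/

open Real MeasureTheory intervalIntegral Filter Topology Set

lemma intervalIntegrable_sub_rpow {r : ℝ} (hr : -1 < r) (c a b : ℝ) :
    IntervalIntegrable (fun s => (c - s) ^ r) volume a b := by
  simpa using ((intervalIntegrable_rpow' hr).comp_sub_left c : IntervalIntegrable _ volume
    (c - (c - a)) (c - (c - b)))

lemma hasDerivAt_sub_rpow {c s : ℝ} (hs : s ≠ c) (r : ℝ) :
    HasDerivAt (fun x => (c - x) ^ r) (-r * (c - s) ^ (r - 1)) s := by
  exact ((Real.hasDerivAt_rpow_const (p := r) (Or.inl (sub_ne_zero.2 hs.symm))).comp s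
    ((hasDerivAt_id s).const_sub c)).congr_deriv (by ring)

lemma tendsto_rpow_neg_mul_sub_nhdsLT {v : ℝ → ℝ} {t α : ℝ} (hv : DifferentiableAt ℝ v t)
    (hα : α < 1) : Tendsto (fun T => (t - T) ^ (-α) * (v T - v t)) (𝓝[<] t) (𝓝 0) := by
  have hslope : Tendsto (slope v t) (𝓝[<] t) (𝓝 (deriv v t)) :=
    hv.hasDerivAt.tendsto_slope.mono_left (nhdsLT_le_nhdsNE t)
  have hpow : Tendsto (fun T => (t - T) ^ (1 - α)) (𝓝[<] t) (𝓝 0) := by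
    have : ContinuousAt (fun T => (t - T) ^ (1 - α)) t :=
      (continuousAt_const.sub continuousAt_id).rpow_const (Or.inr (by linarith))
    simpa [zero_rpow (by linarith : 1 - α ≠ 0)] using this.tendsto.mono_left nhdsWithin_le_nhds
  have hlim := (hslope.mul hpow).neg
  rw [mul_zero, neg_zero] at hlim
  refine hlim.congr' ?_
  filter_upwards [self_mem_nhdsWithin] with T (hT : T < t)
  have hpos : 0 < t - T := sub_pos.2 hT
  rw [slope_def_field, show 1 - α = -α + 1 by ring, rpow_add_one hpos.ne']
  field_simp [(sub_neg.2 hT).ne]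
  ring

lemma integral_rpow_neg_mul_deriv_le_of_lt {v : ℝ → ℝ} {a T t α : ℝ} (hvd : Differentiable ℝ v)
    (hvc : Continuous (deriv v)) (haT : a ≤ T) (hTt : T < t) (hα : 0 ≤ α)
    (hmin : ∀ s ∈ Icc a T, v t ≤ v s) :
    ∫ s in a..T, (t - s) ^ (-α) * deriv v s
      ≤ (t - T) ^ (-α) * (v T - v t) - (t - a) ^ (-α) * (v a - v t) := by
  have hne : ∀ s ∈ uIcc a T, s ≠ t := fun s hs =>
    ((uIcc_of_le haT ▸ hs).2.trans_lt hTt).ne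
  have hu' : ContinuousOn (fun s => -(-α) * (t - s) ^ (-α - 1)) (uIcc a T) :=
    continuousOn_const.mul ((continuousOn_const.sub continuousOn_id).rpow_const
      fun s hs => Or.inl (sub_ne_zero.2 (hne s hs).symm))
  have hparts := intervalIntegral.integral_mul_deriv_eq_deriv_mul (u := fun s => (t - s) ^ (-α))
    (v := fun s => v s - v t) (fun s hs => hasDerivAt_sub_rpow (hne s hs) (-α))
    (fun s _ => (hvd s).hasDerivAt.sub_const (v t)) hu'.intervalIntegrable
    (hvc.intervalIntegrable a T)
  have hrem : 0 ≤ ∫ s in a..T, -(-α) * (t - s) ^ (-α - 1) * (v s - v t) :=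
    integral_nonneg haT fun s hs => mul_nonneg
      (mul_nonneg (by linarith) (rpow_nonneg (sub_nonneg.2 (hs.2.trans hTt.le)) _))
      (sub_nonneg.2 (hmin s hs))
  rw [hparts]
  linarith

lemma integral_rpow_neg_mul_deriv_le {v : ℝ → ℝ} {a t α : ℝ} (hvd : Differentiable ℝ v)
    (hvc : Continuous (deriv v)) (hat : a < t) (hα0 : 0 ≤ α) (hα1 : α < 1)
    (hmin : ∀ s ∈ Icc a t, v t ≤ v s) :
    ∫ s in a..t, (t - s) ^ (-α) * deriv v s ≤ (t - a) ^ (-α) * (v t - v a) := by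
  have hint : IntervalIntegrable (fun s => (t - s) ^ (-α) * deriv v s) volume a t :=
    (intervalIntegrable_sub_rpow (by linarith) t a t).mul_continuousOn hvc.continuousOn
  have hprim : Tendsto (fun T => ∫ s in a..T, (t - s) ^ (-α) * deriv v s) (𝓝[<] t)
      (𝓝 (∫ s in a..t, (t - s) ^ (-α) * deriv v s)) :=
    ((continuousOn_primitive_interval' hint left_mem_uIcc t right_mem_uIcc).mono_of_mem_nhdsWithin
      (by rw [uIcc_of_le hat.le]; exact Icc_mem_nhdsLT hat)).tendsto
  have hbdry : Tendsto (fun T => (t - T) ^ (-α) * (v T - v t) - (t - a) ^ (-α) * (v a - v t))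
      (𝓝[<] t) (𝓝 ((t - a) ^ (-α) * (v t - v a))) := by
    convert (tendsto_rpow_neg_mul_sub_nhdsLT (hvd t) hα1).sub_const
      ((t - a) ^ (-α) * (v a - v t)) using 2
    ring
  refine le_of_tendsto_of_tendsto hprim hbdry ?_
  filter_upwards [Ico_mem_nhdsLT hat] with T hT
  exact integral_rpow_neg_mul_deriv_le_of_lt hvd hvc hT.1 hT.2 hα0
    fun s hs => hmin s ⟨hs.1, hs.2.trans hT.2.le⟩

/-- If a `C¹` function attains its minimum over `[0, t₀]` at the right endpoint,
then its Caputo derivative of order `α ∈ (0,1)` at `t₀` is at most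
`(v(t₀) - v(0)) / (Γ(1-α) t₀^α)`. -/
theorem stmt6 (v : ℝ → ℝ) (hv : ContDiff ℝ 1 v)
    (t₀ : ℝ) (ht₀ : 0 < t₀)
    (hmin : ∀ s ∈ Set.Icc (0 : ℝ) t₀, v t₀ ≤ v s)
    (α : ℝ) (hα : 0 < α) (hα1 : α < 1) :
    (1 / Real.Gamma (1 - α)) * ∫ s in (0 : ℝ)..t₀, (t₀ - s) ^ (-α) * deriv v s
      ≤ (v t₀ - v 0) / (Real.Gamma (1 - α) * t₀ ^ α) := by
  have hΓ : 0 < Gamma (1 - α) := Gamma_pos_of_pos (by linarith)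
  have hbound := integral_rpow_neg_mul_deriv_le (hv.differentiable one_ne_zero)
    (hv.continuous_deriv le_rfl) ht₀ hα.le hα1 hmin
  rw [sub_zero] at hbound
  calc (1 / Gamma (1 - α)) * ∫ s in (0 : ℝ)..t₀, (t₀ - s) ^ (-α) * deriv v s
      ≤ (1 / Gamma (1 - α)) * (t₀ ^ (-α) * (v t₀ - v 0)) :=
        mul_le_mul_of_nonneg_left hbound (one_div_pos.2 hΓ).le
    _ = (v t₀ - v 0) / (Gamma (1 - α) * t₀ ^ α) := by
        rw [rpow_neg ht₀.le]
        field_simp
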